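/- For every partition μ of n ≥ 1, B^{(n)}_μ(t) = (1−t)^{l(μ)}, where (n) is the one-row partition of n. -/

import Mathlib

open scoped BigOperators

namespace Green

noncomputable section

/-- The base field `F = ℚ(t)`, the field of rational functions in `t`. -/
abbrev FF : Type := RatFunc ℚ

/-- The indeterminate `t ∈ ℚ(t)`. -/
def tF : FF := RatFunc.X

/-- The ring of symmetric functions over `F`, identified with the polynomial ring
`F[p₁, p₂, …]` on the power sums, variables indexed by positive integers. -/
abbrev SymF : Type := MvPolynomial ℕ+ FF

/-- The power sum `p_n` for `n ≥ 1` (junk value `1` if `n = 0`). -/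
def pS (n : ℕ) : SymF := if h : 0 < n then MvPolynomial.X (⟨n, h⟩ : ℕ+) else 1

/-- `p_λ = p_{λ₁} ⋯ p_{λ_l}` for a partition given as a multiset of parts. -/
def pMs (m : Multiset ℕ) : SymF := (m.map pS).prod

/-- `z_λ = ∏_i i^{m_i} · m_i!` where `m_i` is the multiplicity of `i` in `λ`. -/
def zMs (m : Multiset ℕ) : ℕ :=
  m.toFinset.prod fun i => i ^ m.count i * (m.count i).factorial

/-- `z_λ(t) = z_λ / ∏_j (1 - t^{λ_j})`. -/
def ztMs (m : Multiset ℕ) : FF := (zMs m : FF) / (m.map fun i => 1 - tF ^ i).prod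

/-- `q_k`: equal to `0` for `k < 0`, `1` for `k = 0`, and `∑_{ν ⊢ k} z_ν(t)⁻¹ p_ν` for `k ≥ 1`. -/
def qq (k : ℤ) : SymF :=
  if k < 0 then 0
  else ∑ ν : Nat.Partition k.toNat, (ztMs ν.parts)⁻¹ • pMs ν.parts

/-- Coefficients of `(1 - R)(∑_{k≥0} t^k R^k) = 1 + ∑_{k≥1} (t^k - t^{k-1}) R^k`. -/
def cRO : ℕ → FF
  | 0 => 1
  | k + 1 => tF ^ (k + 1) - tF ^ k

/-- Index pairs `i < j` for the raising operators `R_{ij}`. -/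
abbrev PairsLT (l : ℕ) : Type := {pr : Fin l × Fin l // pr.1 < pr.2}

/-- The result of applying `∏_{i<j} R_{ij}^{k_{ij}}` to the integer tuple `α`,
where `R_{ij}` translates the index by `e_i - e_j`. -/
def raised {l : ℕ} (α : Fin l → ℤ) (k : PairsLT l → ℕ) : Fin l → ℤ := fun r =>
  α r + ∑ pr : PairsLT l, (k pr : ℤ) *
    ((if pr.val.1 = r then 1 else 0) - (if pr.val.2 = r then 1 else 0))

/-- `q_β = q_{β₁} ⋯ q_{β_l}` for an integer tuple `β`. -/
def qTup {l : ℕ} (β : Fin l → ℤ) : SymF := ∏ i, qq (β i)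

/-- The Hall–Littlewood function
`Q_α(t) = ∏_{1≤i<j≤l} (1 - R_{ij})(∑_{k≥0} t^k R_{ij}^k) q_α`,
the (finitely supported) expansion of the product of raising-operator series. -/
def QTup {l : ℕ} (α : Fin l → ℤ) : SymF :=
  finsum fun k : PairsLT l → ℕ => (∏ pr, cRO (k pr)) • qTup (raised α k)

/-- `Q_α(t)` for an integer list `α`. -/
def QL (α : List ℤ) : SymF := QTup fun i : Fin α.length => α.get i

/-- The weakly decreasing sort of a multiset of naturals. -/
def sortDesc (m : Multiset ℕ) : List ℕ := (m.sort (· ≤ ·)).reverse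

/-- `Q_λ(t)` for a partition given as a multiset of parts. -/
def QMs (m : Multiset ℕ) : SymF := QL ((sortDesc m).map fun i => (i : ℤ))

/-- The Hall–Littlewood bilinear form on `Λ_F`, determined by
`⟨p_λ, p_μ⟩ = δ_{λμ} z_λ(t)` on the power-sum (monomial) basis. -/
def formHL (f g : SymF) : FF :=
  ∑ d ∈ f.support, MvPolynomial.coeff d f * MvPolynomial.coeff d g *
    ztMs (d.toMultiset.map fun i => (i : ℕ))

/-- `q_μ = q_{μ₁} ⋯ q_{μ_l}` for a partition given as a multiset. -/
def qProd (m : Multiset ℕ) : SymF := (m.map fun i => qq (i : ℤ)).prod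

/-- The bitrace coefficient `B^ν_μ(t) = ⟨Q_ν(t), q_μ⟩`. -/
def Btr (ν μ : Multiset ℕ) : FF := formHL (QMs ν) (qProd μ)

/-!
With a single row there are no raising operators, so `Q_{(n)} = q_n`. The coefficient of `p_ν`
in `q_n` is `z_ν(t)⁻¹`, which the form cancels against `z_ν(t)`: for `g` homogeneous of degree
`n`, `⟨q_n, g⟩` is `g` evaluated at `p_i = 1`. This evaluation sends `q_k` to
`S_k = ∑_{ν ⊢ k} z_ν(t)⁻¹`, and marking one part `k` of `ν` gives the recursion
`m S_m = ∑_{k=1}^m (1 - t^k) S_{m-k}`, whence `S_m = 1 - t` for `m ≥ 1`. So `q_μ` evaluates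
to `(1 - t)^{l(μ)}`.
-/

open MvPolynomial

lemma tF_pow_ne_one {k : ℕ} (hk : k ≠ 0) : tF ^ k ≠ 1 := by
  rw [tF, ← RatFunc.algebraMap_X, ← map_pow, ← map_one (algebraMap (Polynomial ℚ) FF), Ne,
    (RatFunc.algebraMap_injective ℚ).eq_iff]
  intro h
  simpa [hk] using congrArg Polynomial.natDegree h

lemma one_sub_tF_pow_ne_zero {k : ℕ} (hk : k ≠ 0) : (1 : FF) - tF ^ k ≠ 0 :=
  sub_ne_zero.mpr (tF_pow_ne_one hk).symm

lemma zMs_cons (k : ℕ) (s : Multiset ℕ) :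
    zMs (k ::ₘ s) = k * (s.count k + 1) * zMs s := by
  classical
  have hk := Finset.mem_insert_self k s.toFinset
  have hs : zMs s = ∏ i ∈ insert k s.toFinset, i ^ s.count i * (s.count i).factorial :=
    (Finset.prod_insert_of_eq_one_if_notMem fun h => by
      simp [Multiset.count_eq_zero_of_notMem (by simpa using h)]).symm
  rw [zMs, Multiset.toFinset_cons, hs, ← Finset.mul_prod_erase _ _ hk,
    ← Finset.mul_prod_erase _ _ hk, Multiset.count_cons_self,
    Finset.prod_congr rfl fun i hi => by rw [Multiset.count_cons_of_ne (Finset.ne_of_mem_erase hi)],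
    pow_succ, Nat.factorial_succ]
  ring

lemma ztMs_cons (k : ℕ) (s : Multiset ℕ) :
    ztMs (k ::ₘ s) = ((k * (s.count k + 1) : ℕ) : FF) / (1 - tF ^ k) * ztMs s := by
  rw [ztMs, ztMs, zMs_cons, Multiset.map_cons, Multiset.prod_cons, Nat.cast_mul, div_mul_div_comm]

lemma ztMs_ne_zero {m : Multiset ℕ} (hm : ∀ x ∈ m, 0 < x) : ztMs m ≠ 0 := by
  refine div_ne_zero (Nat.cast_ne_zero.mpr ?_) (Multiset.prod_ne_zero fun h => ?_)
  · exact Finset.prod_ne_zero_iff.mpr fun i hi =>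
      mul_ne_zero (pow_ne_zero _ (hm i (Multiset.mem_toFinset.mp hi)).ne') (Nat.factorial_ne_zero _)
  · obtain ⟨i, hi, h0⟩ := Multiset.mem_map.mp h
    exact one_sub_tF_pow_ne_zero (hm i hi).ne' h0

lemma inv_ztMs_cons_mul_count {k : ℕ} (hk : k ≠ 0) (s : Multiset ℕ) :
    (ztMs (k ::ₘ s))⁻¹ * ((k * (k ::ₘ s).count k : ℕ) : FF) = (1 - tF ^ k) * (ztMs s)⁻¹ := by
  rw [ztMs_cons, Multiset.count_cons_self, mul_inv, inv_div, mul_right_comm,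
    div_mul_cancel₀ _ (Nat.cast_ne_zero.mpr (mul_ne_zero hk (Nat.succ_ne_zero _)))]

def invZtSum (m : ℕ) : FF := ∑ ν : Nat.Partition m, (ztMs ν.parts)⁻¹

lemma invZtSum_zero : invZtSum 0 = 1 := by
  simp [invZtSum, ztMs, zMs]

lemma sum_inv_ztMs_mul_count {m k : ℕ} (hk : 1 ≤ k) (hkm : k ≤ m) :
    ∑ ν : Nat.Partition m, (ztMs ν.parts)⁻¹ * ((k * ν.parts.count k : ℕ) : FF) =
      (1 - tF ^ k) * invZtSum (m - k) := by
  classical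
  rw [invZtSum, Finset.mul_sum, ← Finset.sum_filter_of_ne (p := fun ν => k ∈ ν.parts),
    Finset.sum_subtype _ (p := fun ν => k ∈ ν.parts) (by simp)]
  · refine Fintype.sum_equiv (Nat.Partition.partitionWithPartEquiv hk hkm) _ _ fun p => ?_
    have h := inv_ztMs_cons_mul_count (Nat.one_le_iff_ne_zero.mp hk) (p.1.parts.erase k)
    rwa [Multiset.cons_erase p.2] at h
  · intro ν _ h
    by_contra hν
    simp [Multiset.count_eq_zero_of_notMem hν] at h

lemma sum_mul_count_parts {m : ℕ} (ν : Nat.Partition m) :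
    ∑ k ∈ Finset.Icc 1 m, k * ν.parts.count k = m := by
  classical
  have hsub : ν.parts.toFinset ⊆ Finset.Icc 1 m := fun i hi => by
    rw [Multiset.mem_toFinset] at hi
    exact Finset.mem_Icc.mpr ⟨ν.parts_pos hi, ν.le_of_mem_parts hi⟩
  calc ∑ k ∈ Finset.Icc 1 m, k * ν.parts.count k
      = ∑ k ∈ ν.parts.toFinset, k * ν.parts.count k :=
        (Finset.sum_subset hsub fun k _ hk => by
          rw [Multiset.count_eq_zero_of_notMem (by simpa using hk), mul_zero]).symm
    _ = ν.parts.sum := by simp [Finset.sum_multiset_count ν.parts, mul_comm]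
    _ = m := ν.parts_sum

lemma natCast_mul_invZtSum (m : ℕ) :
    (m : FF) * invZtSum m = ∑ k ∈ Finset.Icc 1 m, (1 - tF ^ k) * invZtSum (m - k) := by
  calc (m : FF) * invZtSum m
      = ∑ ν : Nat.Partition m, ∑ k ∈ Finset.Icc 1 m,
          (ztMs ν.parts)⁻¹ * ((k * ν.parts.count k : ℕ) : FF) := by
        rw [invZtSum, Finset.mul_sum]
        refine Finset.sum_congr rfl fun ν _ => ?_
        rw [← Finset.mul_sum, ← Nat.cast_sum, sum_mul_count_parts, mul_comm]
    _ = _ := by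
        rw [Finset.sum_comm]
        exact Finset.sum_congr rfl fun k hk =>
          sum_inv_ztMs_mul_count (Finset.mem_Icc.mp hk).1 (Finset.mem_Icc.mp hk).2

lemma sum_Icc_one_sub_pow_mul_add {R : Type*} [CommRing R] (x : R) (M : ℕ) :
    ∑ k ∈ Finset.Icc 1 M, (1 - x ^ k) * (1 - x) + (1 - x ^ (M + 1)) = (M + 1) * (1 - x) := by
  induction M with
  | zero => simp
  | succ M ih =>
    rw [Finset.sum_Icc_succ_top (by omega)]
    push_cast
    linear_combination ih

lemma invZtSum_eq {m : ℕ} (hm : m ≠ 0) : invZtSum m = 1 - tF := by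
  induction m using Nat.strong_induction_on with
  | _ m ih =>
    obtain ⟨M, rfl⟩ := Nat.exists_eq_succ_of_ne_zero hm
    have hlower : ∀ k ∈ Finset.Icc 1 M, (1 - tF ^ k) * invZtSum (M + 1 - k) =
        (1 - tF ^ k) * (1 - tF) := fun k hk => by
      rw [Finset.mem_Icc] at hk
      rw [ih (M + 1 - k) (by omega) (by omega)]
    have hrec := natCast_mul_invZtSum (M + 1)
    rw [Finset.sum_Icc_succ_top (by omega), Nat.sub_self, invZtSum_zero, mul_one,
      Finset.sum_congr rfl hlower, sum_Icc_one_sub_pow_mul_add] at hrec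
    exact mul_left_cancel₀ (Nat.cast_add_one_ne_zero M) (hrec.trans (by ring))

lemma weight_coe_eq_sum_toMultiset (d : ℕ+ →₀ ℕ) :
    Finsupp.weight (fun i : ℕ+ => (i : ℕ)) d = (d.toMultiset.map fun i : ℕ+ => (i : ℕ)).sum := by
  rw [Finsupp.toMultiset_apply, ← Multiset.coe_sumAddMonoidHom, ← Multiset.coe_mapAddMonoidHom,
    map_finsuppSum, map_finsuppSum, Finsupp.weight_apply]
  simp [Multiset.map_nsmul, Multiset.sum_nsmul]

lemma pS_of_pos {k : ℕ} (hk : 0 < k) : pS k = X k.toPNat' := by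
  rw [pS, dif_pos hk]
  exact congrArg X (PNat.eq (by simp [Nat.toPNat'_coe, hk]))

lemma pMs_eq_monomial {m : Multiset ℕ} (hm : ∀ x ∈ m, 0 < x) :
    pMs m = monomial (Multiset.toFinsupp (m.map Nat.toPNat')) 1 := by
  induction m using Multiset.induction_on with
  | empty => simp [pMs]
  | cons a s ih =>
    rw [pMs, Multiset.map_cons, Multiset.prod_cons, ← pMs,
      ih fun x hx => hm x (Multiset.mem_cons_of_mem hx),
      pS_of_pos (hm a (Multiset.mem_cons_self a s)), Multiset.map_cons, ← Multiset.singleton_add,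
      map_add, Multiset.toFinsupp_singleton, monomial_single_add, pow_one]

lemma map_coe_map_toPNat' {m : Multiset ℕ} (hm : ∀ x ∈ m, 0 < x) :
    (m.map Nat.toPNat').map (fun i : ℕ+ => (i : ℕ)) = m := by
  rw [Multiset.map_map]
  conv_rhs => rw [← Multiset.map_id m]
  exact Multiset.map_congr rfl fun x hx => by simp [Nat.toPNat'_coe, hm x hx]

def partExp {n : ℕ} (ν : Nat.Partition n) : ℕ+ →₀ ℕ :=
  Multiset.toFinsupp (ν.parts.map Nat.toPNat')

lemma toMultiset_partExp {n : ℕ} (ν : Nat.Partition n) :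
    (partExp ν).toMultiset.map (fun i : ℕ+ => (i : ℕ)) = ν.parts := by
  rw [partExp, Multiset.toFinsupp_toMultiset]
  exact map_coe_map_toPNat' fun x hx => ν.parts_pos hx

lemma partExp_injective {n : ℕ} : Function.Injective (partExp (n := n)) := fun ν σ h =>
  Nat.Partition.ext (by rw [← toMultiset_partExp ν, h, toMultiset_partExp])

lemma weight_partExp {n : ℕ} (ν : Nat.Partition n) :
    Finsupp.weight (fun i : ℕ+ => (i : ℕ)) (partExp ν) = n := by
  rw [weight_coe_eq_sum_toMultiset, toMultiset_partExp, ν.parts_sum]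

lemma exists_partExp_eq {n : ℕ} {d : ℕ+ →₀ ℕ}
    (hd : Finsupp.weight (fun i : ℕ+ => (i : ℕ)) d = n) : ∃ ν : Nat.Partition n, partExp ν = d := by
  classical
  refine ⟨⟨d.toMultiset.map (fun i : ℕ+ => (i : ℕ)), ?_, ?_⟩, ?_⟩
  · simp
  · rw [← weight_coe_eq_sum_toMultiset, hd]
  · simp [partExp, Multiset.map_map, PNat.coe_toPNat']

lemma qq_natCast (n : ℕ) :
    qq n = ∑ ν : Nat.Partition n, (ztMs ν.parts)⁻¹ • monomial (partExp ν) 1 := by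
  simp only [qq, Int.toNat_natCast, Int.natCast_nonneg, not_lt.mpr, if_false]
  exact Finset.sum_congr rfl fun ν _ => by rw [pMs_eq_monomial fun x hx => ν.parts_pos hx]; rfl

lemma coeff_partExp_qq {n : ℕ} (ν : Nat.Partition n) :
    coeff (partExp ν) (qq n) = (ztMs ν.parts)⁻¹ := by
  simp [qq_natCast, coeff_sum, coeff_monomial, partExp_injective.eq_iff]

lemma isWeightedHomogeneous_qq (n : ℕ) :
    IsWeightedHomogeneous (fun i : ℕ+ => (i : ℕ)) (qq n) n := by
  rw [qq_natCast]
  refine IsWeightedHomogeneous.sum _ _ _ fun ν _ => ?_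
  rw [smul_monomial]
  exact isWeightedHomogeneous_monomial _ _ _ (weight_partExp ν)

lemma qProd_cons (a : ℕ) (s : Multiset ℕ) : qProd (a ::ₘ s) = qq a * qProd s := by
  simp [qProd]

lemma isWeightedHomogeneous_qProd (m : Multiset ℕ) :
    IsWeightedHomogeneous (fun i : ℕ+ => (i : ℕ)) (qProd m) m.sum := by
  induction m using Multiset.induction_on with
  | empty => exact isWeightedHomogeneous_one _ _
  | cons a s ih => rw [qProd_cons, Multiset.sum_cons]; exact (isWeightedHomogeneous_qq a).mul ih

lemma support_subset_image_partExp {n : ℕ} {f : SymF}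
    (hf : IsWeightedHomogeneous (fun i : ℕ+ => (i : ℕ)) f n) :
    f.support ⊆ Finset.univ.image (partExp (n := n)) := fun d hd => by
  obtain ⟨ν, rfl⟩ := exists_partExp_eq (hf (mem_support_iff.mp hd))
  exact Finset.mem_image_of_mem _ (Finset.mem_univ ν)

-- In `formHL` the coercion `ℕ+ → ℕ` elaborates as a monadic map over the multiset.
lemma formHL_eq (f g : SymF) :
    formHL f g = ∑ d ∈ f.support,
      coeff d f * coeff d g * ztMs (d.toMultiset.map fun i : ℕ+ => (i : ℕ)) := by
  simp [formHL, Multiset.bind_singleton]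

lemma formHL_qq {n : ℕ} {g : SymF} (hg : IsWeightedHomogeneous (fun i : ℕ+ => (i : ℕ)) g n) :
    formHL (qq n) g = eval (fun _ => 1) g := by
  classical
  rw [formHL_eq, eval_eq,
    Finset.sum_subset (support_subset_image_partExp (isWeightedHomogeneous_qq n)) fun d _ hd => by
      rw [notMem_support_iff.mp hd, zero_mul, zero_mul],
    Finset.sum_subset (support_subset_image_partExp hg) fun d _ hd => by
      rw [notMem_support_iff.mp hd, zero_mul],
    Finset.sum_image partExp_injective.injOn, Finset.sum_image partExp_injective.injOn]
  refine Finset.sum_congr rfl fun ν _ => ?_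
  have hz := ztMs_ne_zero fun x hx => ν.parts_pos hx
  rw [coeff_partExp_qq, toMultiset_partExp, Finset.prod_congr rfl fun _ _ => one_pow _,
    Finset.prod_const_one, mul_one, mul_right_comm, inv_mul_cancel₀ hz, one_mul]

lemma eval_one_qq (k : ℕ) : eval (fun _ => 1) (qq k) = invZtSum k := by
  simp [qq_natCast, invZtSum, smul_eq_C_mul, eval_monomial, Finsupp.prod]

lemma eval_one_qProd {m : Multiset ℕ} (hm : ∀ x ∈ m, 0 < x) :
    eval (fun _ => 1) (qProd m) = (1 - tF) ^ Multiset.card m := by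
  induction m using Multiset.induction_on with
  | empty => simp [qProd]
  | cons a s ih =>
    rw [qProd_cons, map_mul, eval_one_qq, invZtSum_eq (hm a (Multiset.mem_cons_self a s)).ne',
      ih fun x hx => hm x (Multiset.mem_cons_of_mem hx), Multiset.card_cons, pow_succ']

instance : IsEmpty (PairsLT 1) := ⟨fun pr => pr.2.ne (Subsingleton.elim _ _)⟩

lemma QTup_fin_one (α : Fin 1 → ℤ) : QTup α = qq (α 0) := by
  simp [QTup, finsum_unique, raised, qTup]

lemma QMs_singleton (n : ℕ) : QMs {n} = qq n := by
  rw [QMs, sortDesc, Multiset.sort_singleton]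
  exact QTup_fin_one _

theorem statement18_general (n : ℕ) (μ : List ℕ)
    (hmpos : ∀ x ∈ μ, 0 < x) (hmsum : μ.sum = n) :
    Btr ({n} : Multiset ℕ) (↑μ) = (1 - tF) ^ μ.length := by
  have hhom : IsWeightedHomogeneous (fun i : ℕ+ => (i : ℕ)) (qProd μ) n := by
    simpa [hmsum] using isWeightedHomogeneous_qProd (μ : Multiset ℕ)
  rw [Btr, QMs_singleton, formHL_qq hhom, eval_one_qProd (by simpa using hmpos), Multiset.coe_card]

/-- For every partition `μ ⊢ n`, `n ≥ 1`: `B^{(n)}_μ(t) = (1-t)^{l(μ)}`. -/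
theorem statement18 (n : ℕ) (hn : 1 ≤ n) (μ : List ℕ)
    (hmsort : μ.Pairwise (· ≥ ·)) (hmpos : ∀ x ∈ μ, 0 < x) (hmsum : μ.sum = n) :
    Btr ({n} : Multiset ℕ) (↑μ) = (1 - tF) ^ μ.length :=
  statement18_general n μ hmpos hmsum

end
end Green
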